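/- A real n×n matrix A is stable if and only if there exist real n×n matrices J, R, Q with Jᵀ = −J, R positive semidefinite, and Q positive definite such that A = (J − R)Q. -/

import Mathlib

open Matrix

/-- The complexification of a real matrix. -/
noncomputable def toC {n : ℕ} (A : Matrix (Fin n) (Fin n) ℝ) : Matrix (Fin n) (Fin n) ℂ :=
  A.map (fun a => (a : ℂ))

/-- A real matrix is stable if every complex eigenvalue has nonpositive real part and
every purely imaginary eigenvalue is semisimple (generalized eigenspace = eigenspace). -/
def IsStable {n : ℕ} (A : Matrix (Fin n) (Fin n) ℝ) : Prop :=
  ∀ μ : ℂ, (∃ x : Fin n → ℂ, x ≠ 0 ∧ toC A *ᵥ x = μ • x) →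
    μ.re ≤ 0 ∧ (μ.re = 0 →
      ∀ x : Fin n → ℂ, ((toC A - μ • 1) ^ n) *ᵥ x = 0 ↔ (toC A - μ • 1) *ᵥ x = 0)

/-!
Both sides are equivalent to the existence of a Lyapunov matrix `P ≻ 0` with `AᴴP + PA ≼ 0`.
If `A = (J - R)Q` then `AᵀQ + QA = -2QRQ`; conversely `J` and `-R` are the skew and the
symmetric part of `AP⁻¹`. A Lyapunov matrix forces `Re μ ≤ 0` on eigenvectors, and when
`Re μ = 0` it makes `(A - μ)ᴴP` vanish on every `μ`-eigenvector `y`, so `y = (A - μ)v` gives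
`yᴴPy = 0`: there are no Jordan chains.
Conversely, on the generalized eigenspace of `μ` with `a = -Re μ > 0`, the weighted norm
`∑ᵢ a⁻²ⁱ ‖(A - μ)ⁱx‖²` makes `A - μ` a map of norm at most `a`, hence `Re ⟪x, Ax⟫ ≤ 0`; when
`Re μ = 0`, semisimplicity makes `A` act as `μ`. Summing over the spectral projections gives a
complex Lyapunov matrix, whose real part is a real one.
-/

open Finset
open scoped ComplexOrder

theorem LinearMap.ext_of_iSup_eq_top {R M N ι : Type*} [Semiring R] [AddCommMonoid M]
    [AddCommMonoid N] [Module R M] [Module R N] {p : ι → Submodule R M} (hp : ⨆ i, p i = ⊤)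
    {f g : M →ₗ[R] N} (h : ∀ i, ∀ x ∈ p i, f x = g x) : f = g := by
  have hle : ⨆ i, p i ≤ LinearMap.eqLocus f g :=
    iSup_le fun i x hx => LinearMap.mem_eqLocus.2 (h i x hx)
  exact LinearMap.ext fun x => hle (hp ▸ Submodule.mem_top)

namespace Module.End

variable {K V : Type*} [Field K] [IsAlgClosed K] [AddCommGroup V] [Module K V]
  [FiniteDimensional K V]

theorem exists_genEigenspace_projections (f : End K V) :
    ∃ (S : Finset K) (π : K → End K V), (∀ μ ∈ S, f.HasEigenvalue μ) ∧
      (∀ μ, Commute f (π μ)) ∧ (∀ μ, (f - μ • 1) ^ finrank K V * π μ = 0) ∧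
      ∑ μ ∈ S, π μ = 1 := by
  classical
  have hint : DirectSum.IsInternal f.maxGenEigenspace :=
    DirectSum.isInternal_submodule_of_iSupIndep_of_iSup_eq_top
      f.independent_maxGenEigenspace f.iSup_maxGenEigenspace_eq_top
  let e := LinearEquiv.ofBijective (DirectSum.coeLinearMap f.maxGenEigenspace) hint
  let π : K → End K V := fun μ =>
    (f.maxGenEigenspace μ).subtype ∘ₗ DirectSum.component K K _ μ ∘ₗ e.symm.toLinearMap
  have hπ : ∀ μ ν, ∀ x ∈ f.maxGenEigenspace ν, π μ x = if ν = μ then x else 0 := by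
    intro μ ν x hx
    split_ifs with h
    · subst h
      exact congrArg Subtype.val (hint.ofBijective_coeLinearMap_of_mem hx)
    · exact congrArg Subtype.val (hint.ofBijective_coeLinearMap_of_mem_ne h hx)
  refine ⟨f.finite_hasEigenvalue.toFinset, π,
    fun μ hμ => f.finite_hasEigenvalue.mem_toFinset.1 hμ,
    fun μ => LinearMap.ext_of_iSup_eq_top f.iSup_maxGenEigenspace_eq_top fun ν x hx => ?_,
    fun μ => LinearMap.ext fun x => ?_,
    LinearMap.ext_of_iSup_eq_top f.iSup_maxGenEigenspace_eq_top fun ν x hx => ?_⟩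
  · have hfx := f.mapsTo_maxGenEigenspace_of_comm (Commute.refl f) ν hx
    simp only [mul_apply, hπ μ ν x hx, hπ μ ν _ hfx]
    split_ifs <;> simp
  · have hx : π μ x ∈ f.genEigenspace μ (finrank K V) :=
      f.maxGenEigenspace_eq_genEigenspace_finrank μ ▸ (e.symm x μ).2
    exact mem_genEigenspace_nat.1 hx
  · rw [LinearMap.sum_apply, Finset.sum_congr rfl fun μ _ => hπ μ ν x hx, Finset.sum_ite_eq,
      one_apply]
    split_ifs with hν
    · rfl
    · have hbot : f.maxGenEigenspace ν = ⊥ := by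
        by_contra h
        exact hν (f.finite_hasEigenvalue.mem_toFinset.2 (HasUnifEigenvalue.lt zero_lt_one h))
      rw [hbot, Submodule.mem_bot] at hx
      exact hx.symm

end Module.End

theorem sum_range_pow_inv_sq_mul_sub_nonpos {p q : ℕ → ℝ} {a : ℝ} {N : ℕ} (ha : 0 < a)
    (hq : ∀ i, 0 ≤ q i) (hqN : q N = 0)
    (hpq : ∀ i < N, 2 * a * p i ≤ a ^ 2 * q i + q (i + 1)) :
    ∑ i ∈ range N, (a ^ 2)⁻¹ ^ i * (p i - a * q i) ≤ 0 := by
  set g : ℕ → ℝ := fun i => a / 2 * (a ^ 2)⁻¹ ^ i * q i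
  have hstep : ∀ i < N, (a ^ 2)⁻¹ ^ i * (p i - a * q i) ≤ g (i + 1) - g i := by
    intro i hi
    have key : (a ^ 2)⁻¹ ^ i * (2 * a * p i) ≤ (a ^ 2)⁻¹ ^ i * (a ^ 2 * q i + q (i + 1)) :=
      mul_le_mul_of_nonneg_left (hpq i hi) (by positivity)
    simp only [g, pow_succ]
    field_simp at key ⊢
    nlinarith
  calc ∑ i ∈ range N, (a ^ 2)⁻¹ ^ i * (p i - a * q i)
      ≤ ∑ i ∈ range N, (g (i + 1) - g i) := sum_le_sum fun i hi => hstep i (mem_range.1 hi)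
    _ = g N - g 0 := sum_range_sub g N
    _ ≤ 0 := by
      simp only [g, hqN, mul_zero, zero_sub, neg_nonpos]
      exact mul_nonneg (by positivity) (hq 0)

namespace Matrix

variable {ι R : Type*} [Fintype ι]

def lyapunov [CommRing R] [StarRing R] (M P : Matrix ι ι R) : Matrix ι ι R := Mᴴ * P + P * M

def IsLyapunov [CommRing R] [PartialOrder R] [StarRing R] (M P : Matrix ι ι R) : Prop :=
  P.PosDef ∧ (-lyapunov M P).PosSemidef

section Complex

variable {M P : Matrix ι ι ℂ}

lemma re_star_dotProduct_self_nonneg (v : ι → ℂ) : 0 ≤ (star v ⬝ᵥ v).re :=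
  (Complex.nonneg_iff.1 (dotProduct_star_self_nonneg v)).1

lemma two_mul_re_star_dotProduct_le (u v : ι → ℂ) (a : ℝ) :
    2 * a * (star u ⬝ᵥ v).re ≤ a ^ 2 * (star u ⬝ᵥ u).re + (star v ⬝ᵥ v).re := by
  have h := re_star_dotProduct_self_nonneg (a • u - v)
  have hvu : (star v ⬝ᵥ u).re = (star u ⬝ᵥ v).re := by
    rw [star_dotProduct, Complex.star_def, Complex.conj_re]
  simp only [star_sub, star_smul, star_trivial, sub_dotProduct, dotProduct_sub, smul_dotProduct,
    dotProduct_smul, Complex.sub_re, Complex.smul_re, hvu, smul_eq_mul] at h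
  nlinarith

lemma IsHermitian.star_dotProduct_mulVec_self (hP : P.IsHermitian) (x : ι → ℂ) :
    star x ⬝ᵥ (P *ᵥ x) = ((star x ⬝ᵥ (P *ᵥ x)).re : ℂ) :=
  Complex.ext rfl (hP.im_star_dotProduct_mulVec_self x)

lemma IsHermitian.posSemidef_iff_re (hP : P.IsHermitian) :
    P.PosSemidef ↔ ∀ x, 0 ≤ (star x ⬝ᵥ (P *ᵥ x)).re := by
  rw [posSemidef_iff_dotProduct_mulVec, and_iff_right hP]
  exact forall_congr' fun x => by
    rw [hP.star_dotProduct_mulVec_self, Complex.zero_le_real, Complex.ofReal_re]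

lemma IsHermitian.posDef_iff_re (hP : P.IsHermitian) :
    P.PosDef ↔ ∀ x, x ≠ 0 → 0 < (star x ⬝ᵥ (P *ᵥ x)).re := by
  rw [posDef_iff_dotProduct_mulVec, and_iff_right hP]
  exact forall_congr' fun x => by
    rw [hP.star_dotProduct_mulVec_self, Complex.zero_lt_real, Complex.ofReal_re]

lemma IsHermitian.star_dotProduct_lyapunov_mulVec (hP : P.IsHermitian) (M : Matrix ι ι ℂ)
    (x : ι → ℂ) :
    star x ⬝ᵥ (lyapunov M P *ᵥ x) = (2 * (star x ⬝ᵥ (P *ᵥ (M *ᵥ x))).re : ℝ) := by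
  have h : star x ⬝ᵥ ((Mᴴ * P) *ᵥ x) = star (star x ⬝ᵥ (P *ᵥ (M *ᵥ x))) := by
    rw [← mulVec_mulVec, dotProduct_mulVec, ← star_mulVec, star_dotProduct, star_mulVec, hP.eq,
      ← dotProduct_mulVec]
  rw [lyapunov, add_mulVec, dotProduct_add, h, ← mulVec_mulVec, Complex.star_def, add_comm,
    Complex.add_conj]

lemma IsHermitian.posSemidef_neg_lyapunov_iff (hP : P.IsHermitian) :
    (-lyapunov M P).PosSemidef ↔ ∀ x, (star x ⬝ᵥ (P *ᵥ (M *ᵥ x))).re ≤ 0 := by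
  have hL : (-lyapunov M P).IsHermitian := by
    simp only [IsHermitian, conjTranspose_neg, lyapunov, conjTranspose_add, conjTranspose_mul,
      conjTranspose_conjTranspose, hP.eq, add_comm]
  rw [posSemidef_iff_dotProduct_mulVec, and_iff_right hL]
  refine forall_congr' fun x => ?_
  rw [neg_mulVec, dotProduct_neg, hP.star_dotProduct_lyapunov_mulVec, ← Complex.ofReal_neg,
    Complex.zero_le_real]
  constructor <;> intro h <;> linarith

lemma IsLyapunov.re_le_zero (h : IsLyapunov M P) {μ : ℂ} {x : ι → ℂ} (hx : x ≠ 0)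
    (hMx : M *ᵥ x = μ • x) : μ.re ≤ 0 := by
  have hneg := h.1.isHermitian.posSemidef_neg_lyapunov_iff.1 h.2 x
  rw [hMx, mulVec_smul, dotProduct_smul, h.1.isHermitian.star_dotProduct_mulVec_self,
    smul_eq_mul, Complex.re_mul_ofReal] at hneg
  exact nonpos_of_mul_nonpos_left hneg (h.1.re_dotProduct_pos hx)

lemma star_dotProduct_conjTranspose_mul_self_mulVec (K : Matrix ι ι ℂ) (x v : ι → ℂ) :
    star x ⬝ᵥ ((Kᴴ * K) *ᵥ v) = star (K *ᵥ x) ⬝ᵥ (K *ᵥ v) := by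
  rw [← mulVec_mulVec, dotProduct_mulVec, star_mulVec]

variable [DecidableEq ι]

lemma IsLyapunov.mulVec_eq_zero_of_sq (h : IsLyapunov M P) {μ : ℂ} (hμ : μ.re = 0)
    {v : ι → ℂ} (hv : (M - μ • 1) *ᵥ ((M - μ • 1) *ᵥ v) = 0) : (M - μ • 1) *ᵥ v = 0 := by
  set y := (M - μ • 1) *ᵥ v
  have hP := h.1.isHermitian
  have hMy : M *ᵥ y = μ • y := by
    rwa [sub_mulVec, smul_mulVec, one_mulVec, sub_eq_zero] at hv
  have hLy : lyapunov M P *ᵥ y = 0 := by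
    rw [← neg_eq_zero, ← neg_mulVec, ← h.2.dotProduct_mulVec_zero_iff, neg_mulVec,
      dotProduct_neg, hP.star_dotProduct_lyapunov_mulVec, hMy, mulVec_smul, dotProduct_smul,
      hP.star_dotProduct_mulVec_self, smul_eq_mul, Complex.re_mul_ofReal, hμ]
    simp
  have hconj : star μ = -μ := Complex.ext (by simp [hμ]) (by simp)
  have hadj : (M - μ • 1)ᴴ *ᵥ (P *ᵥ y) = 0 := by
    rw [lyapunov, add_mulVec, ← mulVec_mulVec, ← mulVec_mulVec, hMy, mulVec_smul,
      add_eq_zero_iff_eq_neg] at hLy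
    rw [conjTranspose_sub, conjTranspose_smul, conjTranspose_one, sub_mulVec, hLy, hconj,
      smul_mulVec, one_mulVec]
    simp
  have hyPy : star y ⬝ᵥ (P *ᵥ ((M - μ • 1) *ᵥ v)) = 0 := by
    rw [dotProduct_mulVec, dotProduct_mulVec, ← hP.eq, ← star_mulVec,
      ← conjTranspose_conjTranspose (M - μ • 1), ← star_mulVec, hadj, star_zero, zero_dotProduct]
  by_contra hy
  exact (h.1.dotProduct_mulVec_pos hy).ne' hyPy

lemma IsLyapunov.mulVec_eq_zero_of_pow (h : IsLyapunov M P) {μ : ℂ} (hμ : μ.re = 0) (k : ℕ)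
    {v : ι → ℂ} (hv : (M - μ • 1) ^ k *ᵥ v = 0) : (M - μ • 1) *ᵥ v = 0 := by
  induction k generalizing v with
  | zero => rw [pow_zero, one_mulVec] at hv; rw [hv, mulVec_zero]
  | succ k ih =>
    rw [pow_succ, ← mulVec_mulVec] at hv
    exact h.mulVec_eq_zero_of_sq hμ (ih hv)

/-- For `Re μ = 0` the weights are `0 ^ i`; this is harmless because then `(M - μ) E = 0`. -/
noncomputable def weightedGram (M E : Matrix ι ι ℂ) (μ : ℂ) : Matrix ι ι ℂ :=
  ∑ i ∈ range (Fintype.card ι),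
    ((μ.re ^ 2)⁻¹ ^ i : ℝ) • (((M - μ • 1) ^ i * E)ᴴ * ((M - μ • 1) ^ i * E))

variable {E : Matrix ι ι ℂ} {μ : ℂ}

lemma posSemidef_weightedGram : (weightedGram M E μ).PosSemidef :=
  posSemidef_sum _ fun _ _ => (posSemidef_conjTranspose_mul_self _).smul (by positivity)

lemma re_star_dotProduct_weightedGram_mulVec (x v : ι → ℂ) :
    (star x ⬝ᵥ (weightedGram M E μ *ᵥ v)).re = ∑ i ∈ range (Fintype.card ι),
      (μ.re ^ 2)⁻¹ ^ i *
        (star ((M - μ • 1) ^ i *ᵥ (E *ᵥ x)) ⬝ᵥ ((M - μ • 1) ^ i *ᵥ (E *ᵥ v))).re := by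
  simp only [weightedGram, sum_mulVec, dotProduct_sum, Complex.re_sum, smul_mulVec,
    dotProduct_smul, Complex.smul_re, smul_eq_mul, star_dotProduct_conjTranspose_mul_self_mulVec,
    mulVec_mulVec]

lemma re_star_dotProduct_weightedGram_mulVec_mulVec_nonpos (hcomm : Commute M E)
    (hnil : (M - μ • 1) ^ Fintype.card ι * E = 0) (hre : μ.re ≤ 0)
    (hss : μ.re = 0 → (M - μ • 1) * E = 0) (x : ι → ℂ) :
    (star x ⬝ᵥ (weightedGram M E μ *ᵥ (M *ᵥ x))).re ≤ 0 := by
  rw [re_star_dotProduct_weightedGram_mulVec]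
  set B := M - μ • 1
  set s : ℕ → ι → ℂ := fun i => B ^ i *ᵥ (E *ᵥ x)
  have hs : ∀ i, B ^ i *ᵥ (E *ᵥ (M *ᵥ x)) = s (i + 1) + μ • s i := by
    intro i
    rw [mulVec_mulVec x E M, ← hcomm.eq, ← mulVec_mulVec, show M = B + μ • 1 by simp [B],
      add_mulVec, smul_mulVec, one_mulVec, mulVec_add, mulVec_smul, mulVec_mulVec, ← pow_succ]
  have hterm : ∀ i, (star (B ^ i *ᵥ (E *ᵥ x)) ⬝ᵥ (B ^ i *ᵥ (E *ᵥ (M *ᵥ x)))).re =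
      (star (s i) ⬝ᵥ s (i + 1)).re + μ.re * (star (s i) ⬝ᵥ s i).re := by
    intro i
    have him := (Complex.nonneg_iff.1 (dotProduct_star_self_nonneg (s i))).2
    rw [hs, dotProduct_add, dotProduct_smul, smul_eq_mul, Complex.add_re, Complex.mul_re, ← him,
      mul_zero, sub_zero]
  simp only [hterm]
  rcases hre.lt_or_eq with hneg | hzero
  · have hsN : s (Fintype.card ι) = 0 := by
      rw [show s _ = _ from mulVec_mulVec x _ E, hnil, zero_mulVec]
    have key := sum_range_pow_inv_sq_mul_sub_nonpos (a := -μ.re) (N := Fintype.card ι)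
      (p := fun i => (star (s i) ⬝ᵥ s (i + 1)).re) (q := fun i => (star (s i) ⬝ᵥ s i).re)
      (neg_pos.2 hneg) (fun i => re_star_dotProduct_self_nonneg _)
      (by simp only [hsN, dotProduct_zero, Complex.zero_re])
      (fun i _ => two_mul_re_star_dotProduct_le _ _ _)
    simpa only [neg_sq, neg_mul, sub_neg_eq_add] using key
  · have hsucc : ∀ i, s (i + 1) = 0 := fun i => by
      rw [show s (i + 1) = _ from mulVec_mulVec x _ E, pow_succ, mul_assoc, hss hzero, mul_zero,
        zero_mulVec]
    refine (sum_eq_zero fun i _ => ?_).le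
    rw [hsucc, dotProduct_zero, Complex.zero_re, hzero]
    ring

theorem isLyapunov_sum_weightedGram {S : Finset ℂ} {E : ℂ → Matrix ι ι ℂ}
    (hcomm : ∀ μ, Commute M (E μ)) (hnil : ∀ μ, (M - μ • 1) ^ Fintype.card ι * E μ = 0)
    (hsum : ∑ μ ∈ S, E μ = 1) (hre : ∀ μ ∈ S, μ.re ≤ 0)
    (hss : ∀ μ ∈ S, μ.re = 0 → (M - μ • 1) * E μ = 0) :
    IsLyapunov M (∑ μ ∈ S, weightedGram M (E μ) μ) := by
  have hPSD : (∑ μ ∈ S, weightedGram M (E μ) μ).PosSemidef :=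
    posSemidef_sum S fun _ _ => posSemidef_weightedGram
  have hP := hPSD.isHermitian
  have hre_sum : ∀ x v : ι → ℂ, (star x ⬝ᵥ ((∑ μ ∈ S, weightedGram M (E μ) μ) *ᵥ v)).re =
      ∑ μ ∈ S, (star x ⬝ᵥ (weightedGram M (E μ) μ *ᵥ v)).re := fun x v => by
    rw [sum_mulVec, dotProduct_sum, Complex.re_sum]
  refine ⟨hP.posDef_iff_re.2 fun x hx => ?_, hP.posSemidef_neg_lyapunov_iff.2 fun x => ?_⟩
  · obtain ⟨μ, hμS, hμ⟩ : ∃ μ ∈ S, E μ *ᵥ x ≠ 0 := by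
      by_contra! h
      exact hx (by rw [← one_mulVec x, ← hsum, sum_mulVec]; exact sum_eq_zero h)
    have hcard : 0 < Fintype.card ι := by
      obtain ⟨i, -⟩ := Function.ne_iff.1 hx
      exact Fintype.card_pos_iff.2 ⟨i⟩
    rw [hre_sum]
    refine sum_pos' (fun ν _ => posSemidef_weightedGram.re_dotProduct_nonneg x) ⟨μ, hμS, ?_⟩
    rw [re_star_dotProduct_weightedGram_mulVec]
    refine lt_of_lt_of_le ?_ (single_le_sum (fun i _ => mul_nonneg (by positivity)
      (re_star_dotProduct_self_nonneg _)) (mem_range.2 hcard))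
    simpa using (Complex.pos_iff.1 (dotProduct_star_self_pos_iff.2 hμ)).1
  · rw [hre_sum]
    exact sum_nonpos fun μ hμ => re_star_dotProduct_weightedGram_mulVec_mulVec_nonpos (hcomm μ)
      (hnil μ) (hre μ hμ) (hss μ hμ) x

theorem exists_genEigenspace_projections (M : Matrix ι ι ℂ) :
    ∃ (S : Finset ℂ) (E : ℂ → Matrix ι ι ℂ), (∀ μ ∈ S, ∃ x, x ≠ 0 ∧ M *ᵥ x = μ • x) ∧
      (∀ μ, Commute M (E μ)) ∧ (∀ μ, (M - μ • 1) ^ Fintype.card ι * E μ = 0) ∧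
      ∑ μ ∈ S, E μ = 1 := by
  obtain ⟨S, π, heig, hcomm, hnil, hsum⟩ :=
    Module.End.exists_genEigenspace_projections (toLinAlgEquiv' M)
  let e := (toLinAlgEquiv' (R := ℂ) (n := ι)).symm
  refine ⟨S, fun μ => e (π μ), fun μ hμ => ?_, fun μ => ?_, fun μ => ?_, ?_⟩
  · obtain ⟨x, hx⟩ := (heig μ hμ).exists_hasEigenvector
    exact ⟨x, hx.2, by rw [← toLinAlgEquiv'_apply]; exact Module.End.mem_eigenspace_iff.1 hx.1⟩
  · simpa [e] using (hcomm μ).map e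
  · simpa [e, Module.finrank_fintype_fun_eq_card] using congrArg e (hnil μ)
  · simpa [e] using congrArg e hsum

theorem exists_isLyapunov_of_eigenvalues (M : Matrix ι ι ℂ)
    (h : ∀ μ : ℂ, (∃ x, x ≠ 0 ∧ M *ᵥ x = μ • x) → μ.re ≤ 0 ∧
      (μ.re = 0 → ∀ v, (M - μ • 1) ^ Fintype.card ι *ᵥ v = 0 → (M - μ • 1) *ᵥ v = 0)) :
    ∃ P, IsLyapunov M P := by
  obtain ⟨S, E, heig, hcomm, hnil, hsum⟩ := exists_genEigenspace_projections M
  refine ⟨_, isLyapunov_sum_weightedGram hcomm hnil hsum (fun μ hμ => (h μ (heig μ hμ)).1)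
    fun μ hμ h0 => ext_iff_mulVec.2 fun v => ?_⟩
  rw [← mulVec_mulVec, zero_mulVec]
  exact (h μ (heig μ hμ)).2 h0 _ (by rw [mulVec_mulVec, hnil, zero_mulVec])

end Complex

omit [Fintype ι] in
lemma isHermitian_map_re {X : Matrix ι ι ℂ} (hX : X.IsHermitian) : (X.map Complex.re).IsHermitian :=
  IsHermitian.ext fun i j => by simpa using congrArg Complex.re (hX.apply i j)

lemma dotProduct_map_re_mulVec (X : Matrix ι ι ℂ) (u : ι → ℝ) :
    u ⬝ᵥ (X.map Complex.re *ᵥ u) =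
      (star (fun i => (u i : ℂ)) ⬝ᵥ (X *ᵥ fun i => (u i : ℂ))).re := by
  simp only [dotProduct, mulVec, Pi.star_apply, Complex.star_def, Complex.conj_ofReal, map_apply,
    Finset.mul_sum, Complex.re_sum]
  refine Finset.sum_congr rfl fun i _ => Finset.sum_congr rfl fun j _ => ?_
  simp [Complex.mul_re]

lemma PosSemidef.map_re {X : Matrix ι ι ℂ} (hX : X.PosSemidef) : (X.map Complex.re).PosSemidef :=
  .of_dotProduct_mulVec_nonneg (isHermitian_map_re hX.isHermitian) fun u => by
    rw [star_trivial, dotProduct_map_re_mulVec]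
    exact hX.re_dotProduct_nonneg _

lemma PosDef.map_re {X : Matrix ι ι ℂ} (hX : X.PosDef) : (X.map Complex.re).PosDef :=
  .of_dotProduct_mulVec_pos (isHermitian_map_re hX.isHermitian) fun u hu => by
    rw [star_trivial, dotProduct_map_re_mulVec]
    exact hX.re_dotProduct_pos fun h => hu (funext fun i => by simpa using congrFun h i)

section Real

variable {A J R Q P : Matrix ι ι ℝ}

lemma isLyapunov_of_eq_sub_mul (hJ : Jᵀ = -J) (hR : R.PosSemidef) (hQ : Q.PosDef)
    (hA : A = (J - R) * Q) : IsLyapunov A Q := by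
  have hJ' : Jᴴ = -J := by rw [conjTranspose_eq_transpose_of_trivial, hJ]
  have hL : -lyapunov A Q = (2 : ℝ) • (Qᴴ * R * Q) := by
    rw [lyapunov, hA, conjTranspose_mul, conjTranspose_sub, hJ', hR.isHermitian.eq,
      hQ.isHermitian.eq, two_smul]
    noncomm_ring
  exact ⟨hQ, hL ▸ (hR.conjTranspose_mul_mul_same Q).smul (by norm_num)⟩

variable [DecidableEq ι]

lemma IsLyapunov.exists_eq_sub_mul (h : IsLyapunov A P) :
    ∃ J R Q : Matrix ι ι ℝ, Jᵀ = -J ∧ R.PosSemidef ∧ Q.PosDef ∧ A = (J - R) * Q := by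
  have hdet := (isUnit_iff_isUnit_det P).1 h.1.isUnit
  have hPt : Pᵀ = P := by rw [← conjTranspose_eq_transpose_of_trivial, h.1.isHermitian.eq]
  have hPit : (P⁻¹)ᵀ = P⁻¹ := by rw [transpose_nonsing_inv, hPt]
  have hsandwich : (P⁻¹)ᴴ * -lyapunov A P * P⁻¹ = -(P⁻¹ * Aᵀ + A * P⁻¹) := by
    rw [lyapunov, conjTranspose_eq_transpose_of_trivial, conjTranspose_eq_transpose_of_trivial,
      hPit]
    calc P⁻¹ * -(Aᵀ * P + P * A) * P⁻¹ = -(P⁻¹ * Aᵀ * (P * P⁻¹) + P⁻¹ * P * A * P⁻¹) := by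
          noncomm_ring
      _ = _ := by
        rw [mul_nonsing_inv P hdet, nonsing_inv_mul P hdet, Matrix.mul_one, Matrix.one_mul]
  refine ⟨(2 : ℝ)⁻¹ • (A * P⁻¹ - P⁻¹ * Aᵀ), (2 : ℝ)⁻¹ • ((P⁻¹)ᴴ * -lyapunov A P * P⁻¹), P,
    ?_, (h.2.conjTranspose_mul_mul_same _).smul (by norm_num), h.1, ?_⟩
  · rw [transpose_smul, transpose_sub, transpose_mul, transpose_mul, hPit, transpose_transpose]
    module
  · have hJR : (2 : ℝ)⁻¹ • (A * P⁻¹ - P⁻¹ * Aᵀ) - (2 : ℝ)⁻¹ • -(P⁻¹ * Aᵀ + A * P⁻¹) = A * P⁻¹ := by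
      module
    rw [hsandwich, hJR, Matrix.mul_assoc, nonsing_inv_mul P hdet, Matrix.mul_one]

end Real

end Matrix

section Complexification

variable {n : ℕ} {A B P : Matrix (Fin n) (Fin n) ℝ}

lemma toC_neg_lyapunov (A P : Matrix (Fin n) (Fin n) ℝ) :
    toC (-lyapunov A P) = -lyapunov (toC A) (toC P) := by
  ext i j
  simp [toC, lyapunov, mul_apply, conjTranspose_apply]

lemma neg_lyapunov_toC_map_re (A : Matrix (Fin n) (Fin n) ℝ) (X : Matrix (Fin n) (Fin n) ℂ) :
    (-lyapunov (toC A) X).map Complex.re = -lyapunov A (X.map Complex.re) := by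
  ext i j
  simp [toC, lyapunov, mul_apply, conjTranspose_apply, Complex.re_sum]

lemma re_star_dotProduct_toC_mulVec (B : Matrix (Fin n) (Fin n) ℝ) (z : Fin n → ℂ) :
    (star z ⬝ᵥ (toC B *ᵥ z)).re =
      (fun i => (z i).re) ⬝ᵥ (B *ᵥ fun i => (z i).re) +
        (fun i => (z i).im) ⬝ᵥ (B *ᵥ fun i => (z i).im) := by
  simp only [dotProduct, mulVec, Pi.star_apply, toC, map_apply, Finset.mul_sum,
    Complex.re_sum, ← Finset.sum_add_distrib]
  refine Finset.sum_congr rfl fun i _ => Finset.sum_congr rfl fun j _ => ?_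
  simp [Complex.mul_re, Complex.mul_im]

lemma isHermitian_toC (hB : B.IsHermitian) : (toC B).IsHermitian :=
  IsHermitian.ext fun i j => by simpa [toC] using congrArg Complex.ofReal (hB.apply i j)

lemma Matrix.PosSemidef.toC (hB : B.PosSemidef) : (toC B).PosSemidef :=
  (isHermitian_toC hB.isHermitian).posSemidef_iff_re.2 fun z => by
    rw [re_star_dotProduct_toC_mulVec]
    simpa using add_nonneg (hB.dotProduct_mulVec_nonneg fun i => (z i).re)
      (hB.dotProduct_mulVec_nonneg fun i => (z i).im)

lemma Matrix.PosDef.toC (hB : B.PosDef) : (toC B).PosDef := by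
  have hpos : ∀ u, u ≠ 0 → 0 < u ⬝ᵥ (B *ᵥ u) := fun u hu => by
    simpa using hB.dotProduct_mulVec_pos hu
  have hnonneg : ∀ u, 0 ≤ u ⬝ᵥ (B *ᵥ u) := fun u => by
    simpa using hB.posSemidef.dotProduct_mulVec_nonneg u
  refine (isHermitian_toC hB.isHermitian).posDef_iff_re.2 fun z hz => ?_
  rw [re_star_dotProduct_toC_mulVec]
  by_cases h : (fun i => (z i).re) = 0
  · refine add_pos_of_nonneg_of_pos (hnonneg _) (hpos _ fun h' => hz ?_)
    exact funext fun i => Complex.ext (congrFun h i) (congrFun h' i)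
  · exact add_pos_of_pos_of_nonneg (hpos _ h) (hnonneg _)

lemma Matrix.IsLyapunov.map_re {X : Matrix (Fin n) (Fin n) ℂ} (h : IsLyapunov (toC A) X) :
    IsLyapunov A (X.map Complex.re) :=
  ⟨h.1.map_re, neg_lyapunov_toC_map_re A X ▸ h.2.map_re⟩

lemma Matrix.IsLyapunov.toC (h : IsLyapunov A P) : IsLyapunov (toC A) (toC P) :=
  ⟨h.1.toC, toC_neg_lyapunov A P ▸ h.2.toC⟩

lemma IsStable.exists_isLyapunov (hA : IsStable A) : ∃ P, IsLyapunov A P := by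
  obtain ⟨X, hX⟩ := exists_isLyapunov_of_eigenvalues (toC A) fun μ hμ => by
    rw [Fintype.card_fin]
    exact ⟨(hA μ hμ).1, fun h0 v => ((hA μ hμ).2 h0 v).1⟩
  exact ⟨_, hX.map_re⟩

lemma isStable_of_isLyapunov (h : IsLyapunov A P) : IsStable A := by
  have hC := h.toC
  rintro μ ⟨x, hx, hAx⟩
  refine ⟨hC.re_le_zero hx hAx, fun hμ v => ⟨hC.mulVec_eq_zero_of_pow hμ n, fun hv => ?_⟩⟩
  obtain ⟨k, rfl⟩ : ∃ k, n = k + 1 :=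
    Nat.exists_eq_succ_of_ne_zero (by rintro rfl; exact hx (Subsingleton.elim _ _))
  rw [pow_succ, ← mulVec_mulVec, hv, mulVec_zero]

end Complexification

theorem stable_iff_DH {n : ℕ} (A : Matrix (Fin n) (Fin n) ℝ) :
    IsStable A ↔
      ∃ J R Q : Matrix (Fin n) (Fin n) ℝ,
        Jᵀ = -J ∧ R.PosSemidef ∧ Q.PosDef ∧ A = (J - R) * Q := by
  constructor
  · intro hA
    obtain ⟨P, hP⟩ := hA.exists_isLyapunov
    exact hP.exists_eq_sub_mul
  · rintro ⟨J, R, Q, hJ, hR, hQ, hA⟩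
    exact isStable_of_isLyapunov (isLyapunov_of_eq_sub_mul hJ hR hQ hA)
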